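/- arXiv:1603.04913 — 3 statements merged into one kernel-verified Lean document; each statement's English description precedes it below -/
import Mathlib

section
/- The function K(x,ξ) = -sgn(x) · (1/2)·√(λ/ε) · I₁(√((λ/ε)(x²-ξ²))) · √((x+ξ)/(x-ξ)) satisfies, for x > 0 and -x < ξ < x, the hyperbolic PDE K_xx - K_ξξ = (λ/ε) K, together with the boundary conditions K(x,x) = -λx/(2ε) (in the limit ξ → x) and K(x,-x) = 0 (in the limit ξ → -x). -/
open Real

noncomputable def Gf (I1 : ℝ → ℝ) (w : ℝ) : ℝ := I1 (Real.sqrt w) / Real.sqrt w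
noncomputable def G1f (I1 : ℝ → ℝ) (w : ℝ) : ℝ :=
  (deriv I1 (Real.sqrt w) * Real.sqrt w - I1 (Real.sqrt w)) / (2 * Real.sqrt w ^ 3)
noncomputable def G2f (I1 : ℝ → ℝ) (w : ℝ) : ℝ :=
  (deriv (deriv I1) (Real.sqrt w) * Real.sqrt w ^ 2 - 3 * deriv I1 (Real.sqrt w) * Real.sqrt w
    + 3 * I1 (Real.sqrt w)) / (4 * Real.sqrt w ^ 5)

lemma hasDerivAt_Gf (I1 : ℝ → ℝ) (h : ContDiff ℝ (⊤ : ℕ∞) I1) {w : ℝ} (hw : 0 < w) :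
    HasDerivAt (Gf I1) (G1f I1 w) w := by
  have h2 : ContDiff ℝ (⊤:ℕ∞) I1 := h.of_le (mod_cast le_top)
  have hz : 0 < Real.sqrt w := Real.sqrt_pos.mpr hw
  have hz2 : Real.sqrt w ^ 2 = w := Real.sq_sqrt hw.le
  have hs : HasDerivAt Real.sqrt (1 / (2 * Real.sqrt w)) w := Real.hasDerivAt_sqrt hw.ne'
  have hI : HasDerivAt I1 (deriv I1 (Real.sqrt w)) (Real.sqrt w) :=
    ((h2.differentiable (by simp)) (Real.sqrt w)).hasDerivAt
  have hdiv := (hI.comp w hs).div hs hz.ne'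
  refine hdiv.congr_deriv ?_
  unfold G1f
  obtain ⟨z, hz0, rfl⟩ : ∃ z : ℝ, 0 < z ∧ z ^ 2 = w := ⟨_, hz, hz2⟩
  simp only [Function.comp_apply, Real.sqrt_sq hz0.le]
  rw [div_eq_div_iff (by positivity) (by positivity)]
  field_simp

lemma hasDerivAt_G1f (I1 : ℝ → ℝ) (h : ContDiff ℝ (⊤ : ℕ∞) I1) {w : ℝ} (hw : 0 < w) :
    HasDerivAt (G1f I1) (G2f I1 w) w := by
  have h2 : ContDiff ℝ (⊤:ℕ∞) I1 := h.of_le (mod_cast le_top)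
  have h3 := (contDiff_infty_iff_deriv.mp h2).2
  have hz : 0 < Real.sqrt w := Real.sqrt_pos.mpr hw
  have hz2 : Real.sqrt w ^ 2 = w := Real.sq_sqrt hw.le
  have hs : HasDerivAt Real.sqrt (1 / (2 * Real.sqrt w)) w := Real.hasDerivAt_sqrt hw.ne'
  have hd1 : HasDerivAt (deriv I1) (deriv (deriv I1) (Real.sqrt w)) (Real.sqrt w) :=
    ((h3.differentiable (by simp)) (Real.sqrt w)).hasDerivAt
  have hI : HasDerivAt I1 (deriv I1 (Real.sqrt w)) (Real.sqrt w) :=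
    ((h2.differentiable (by simp)) (Real.sqrt w)).hasDerivAt
  have hnum := ((hd1.comp w hs).mul hs).sub (hI.comp w hs)
  have hden := (hs.pow 3).const_mul (2:ℝ)
  have hden0 : 2 * Real.sqrt w ^ 3 ≠ 0 := by positivity
  have hdiv := hnum.div hden hden0
  refine hdiv.congr_deriv ?_
  unfold G2f
  obtain ⟨z, hz0, rfl⟩ : ∃ z : ℝ, 0 < z ∧ z ^ 2 = w := ⟨_, hz, hz2⟩
  simp only [Function.comp_apply, Pi.mul_apply, Pi.sub_apply, Pi.pow_apply, Real.sqrt_sq hz0.le]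
  field_simp
  ring

lemma ode_Gf (I1 : ℝ → ℝ)
    (hODE : ∀ z : ℝ, z ^ 2 * deriv (deriv I1) z + z * deriv I1 z - (z ^ 2 + 1) * I1 z = 0)
    {w : ℝ} (hw : 0 < w) :
    4 * w * G2f I1 w + 8 * G1f I1 w = Gf I1 w := by
  have hz : 0 < Real.sqrt w := Real.sqrt_pos.mpr hw
  have hz2 : Real.sqrt w ^ 2 = w := Real.sq_sqrt hw.le
  unfold Gf G1f G2f
  obtain ⟨z, hz0, rfl⟩ : ∃ z : ℝ, 0 < z ∧ z ^ 2 = w := ⟨_, hz, hz2⟩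
  have h := hODE z
  simp only [Real.sqrt_sq hz0.le]
  field_simp
  linear_combination 2 * h

lemma Kred (lam eps : ℝ) (hlam : 0 < lam) (heps : 0 < eps) (I1 : ℝ → ℝ) (K : ℝ → ℝ → ℝ)
  (hK : ∀ x ξ : ℝ, K x ξ =
      -(Real.sign x) * (1 / 2) * Real.sqrt (lam / eps) *
        I1 (Real.sqrt (lam / eps * (x ^ 2 - ξ ^ 2))) * Real.sqrt ((x + ξ) / (x - ξ)))
  (p q : ℝ) (hp : 0 < p) (hq : q ^ 2 < p ^ 2) :
    K p q = -(lam / eps / 2) * (p + q) * Gf I1 (lam / eps * (p ^ 2 - q ^ 2)) := by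
  set a := lam / eps with ha_def
  have ha : 0 < a := div_pos hlam heps
  clear_value a
  have hpq1 : 0 < p - q := by nlinarith
  have hpq2 : 0 < p + q := by nlinarith
  have hwp : 0 < a * (p ^ 2 - q ^ 2) := by nlinarith
  have hz : 0 < Real.sqrt (a * (p ^ 2 - q ^ 2)) := Real.sqrt_pos.mpr hwp
  rw [hK, Real.sign_of_pos hp]
  unfold Gf
  set z := Real.sqrt (a * (p ^ 2 - q ^ 2)) with hzdef
  set s := Real.sqrt a with hsdef
  have hs : 0 < s := Real.sqrt_pos.mpr ha
  have hsa : s * s = a := Real.mul_self_sqrt ha.le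
  have hratio : Real.sqrt ((p + q) / (p - q)) = s * (p + q) / z := by
    rw [show (p + q) / (p - q) = (s * (p + q) / z) ^ 2 from ?_, Real.sqrt_sq (by positivity)]
    rw [hzdef, hsdef, div_pow, mul_pow, Real.sq_sqrt ha.le, Real.sq_sqrt hwp.le]
    have : p ^ 2 - q ^ 2 ≠ 0 := by nlinarith
    field_simp
    ring
  rw [hratio]
  clear_value z s
  field_simp
  linear_combination (-I1 z) * hsa

/-- The explicit backstepping kernel
`K(x,ξ) = -sgn x · (1/2)√(λ/ε) I₁(√((λ/ε)(x²-ξ²))) √((x+ξ)/(x-ξ))`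
satisfies the kernel PDE `K_xx - K_ξξ = (λ/ε) K` on `T₁ = {x > 0, -x < ξ < x}`
together with the boundary conditions `K(x,x) = -λx/(2ε)` and `K(x,-x) = 0`
(both in the sense of limits). Here `I₁` is the modified Bessel function of the
first kind of order one, characterized by its ODE, smoothness, and behavior near `0`. -/
theorem explicit_kernel_solves_pde
    (lam eps : ℝ) (hlam : 0 < lam) (heps : 0 < eps)
    (I1 : ℝ → ℝ) (hI1smooth : ContDiff ℝ (⊤ : ℕ∞) I1)
    (hODE : ∀ z : ℝ, z ^ 2 * deriv (deriv I1) z + z * deriv I1 z - (z ^ 2 + 1) * I1 z = 0)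
    (hnear0 : (fun z => I1 z - z / 2) =O[nhds 0] fun z => z ^ 3)
    (K : ℝ → ℝ → ℝ)
    (hK : ∀ x ξ : ℝ, K x ξ =
      -(Real.sign x) * (1 / 2) * Real.sqrt (lam / eps) *
        I1 (Real.sqrt (lam / eps * (x ^ 2 - ξ ^ 2))) * Real.sqrt ((x + ξ) / (x - ξ))) :
    ∀ x : ℝ, 0 < x →
      (∀ ξ : ℝ, -x < ξ → ξ < x →
        deriv (deriv fun x' => K x' ξ) x - deriv (deriv fun ξ' => K x ξ') ξ =
          lam / eps * K x ξ) ∧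
      Filter.Tendsto (fun ξ => K x ξ) (nhdsWithin x (Set.Iio x))
        (nhds (-(lam * x) / (2 * eps))) ∧
      Filter.Tendsto (fun ξ => K x ξ) (nhdsWithin (-x) (Set.Ioi (-x))) (nhds 0) := by
  intro x hx
  have ha : 0 < lam / eps := div_pos hlam heps
  have hxx : -x < x := by linarith
  -- limit of Gf at 0+
  have hsqrt_t : Filter.Tendsto Real.sqrt (nhdsWithin (0:ℝ) (Set.Ioi 0))
      (nhdsWithin (0:ℝ) (Set.Ioi 0)) := by
    apply tendsto_nhdsWithin_of_tendsto_nhds_of_eventually_within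
    · have h0 := Real.continuous_sqrt.tendsto 0
      rw [Real.sqrt_zero] at h0
      exact h0.mono_left nhdsWithin_le_nhds
    · filter_upwards [self_mem_nhdsWithin] with z hz
      exact Real.sqrt_pos.mpr hz
  have hIlim : Filter.Tendsto (fun z => I1 z / z) (nhdsWithin (0:ℝ) (Set.Ioi 0))
      (nhds (1/2)) := by
    have hb := (hnear0.mono nhdsWithin_le_nhds).mul
      (Asymptotics.isBigO_refl (fun z : ℝ => z⁻¹) (nhdsWithin (0:ℝ) (Set.Ioi 0)))
    have ht : Filter.Tendsto (fun z : ℝ => z ^ 3 * z⁻¹) (nhdsWithin (0:ℝ) (Set.Ioi 0))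
        (nhds 0) := by
      have h2 : Filter.Tendsto (fun z : ℝ => z ^ 2) (nhdsWithin (0:ℝ) (Set.Ioi 0)) (nhds 0) := by
        have h3 := (continuous_pow 2).tendsto (0:ℝ)
        simpa using h3.mono_left nhdsWithin_le_nhds
      refine h2.congr' ?_
      filter_upwards [self_mem_nhdsWithin] with z hz
      have : z ≠ 0 := ne_of_gt hz
      field_simp
    have h0 := hb.trans_tendsto ht
    have hsum := h0.add (tendsto_const_nhds (x := (1/2:ℝ)))
    rw [zero_add] at hsum
    refine hsum.congr' ?_
    filter_upwards [self_mem_nhdsWithin] with z hz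
    have hz0 : z ≠ 0 := ne_of_gt hz
    field_simp
    ring
  have hGlim : Filter.Tendsto (Gf I1) (nhdsWithin (0:ℝ) (Set.Ioi 0)) (nhds (1/2)) :=
    hIlim.comp hsqrt_t
  refine ⟨?_, ?_, ?_⟩
  · -- the PDE
    intro ξ hξ1 hξ2
    have hξx : ξ ^ 2 < x ^ 2 := by nlinarith
    have hw : 0 < lam / eps * (x ^ 2 - ξ ^ 2) := by nlinarith
    -- second x-derivative
    have hUopen : IsOpen {p : ℝ | 0 < p ∧ ξ ^ 2 < p ^ 2} :=
      (isOpen_lt continuous_const continuous_id).inter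
        (isOpen_lt continuous_const (continuous_pow 2))
    have hD1 : ∀ p : ℝ, 0 < p → ξ ^ 2 < p ^ 2 → HasDerivAt (fun p' => K p' ξ)
        (-(lam / eps / 2) * (Gf I1 (lam / eps * (p ^ 2 - ξ ^ 2)) +
          ((p + ξ) * G1f I1 (lam / eps * (p ^ 2 - ξ ^ 2))) * (2 * (lam / eps) * p))) p := by
      intro p hp hp2
      have hwp : 0 < lam / eps * (p ^ 2 - ξ ^ 2) := by nlinarith
      have hwD : HasDerivAt (fun p' : ℝ => lam / eps * (p' ^ 2 - ξ ^ 2))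
          (2 * (lam / eps) * p) p := by
        have h := ((hasDerivAt_pow 2 p).sub_const (ξ ^ 2)).const_mul (lam / eps)
        refine h.congr_deriv ?_
        push_cast
        ring
      have hGD := (hasDerivAt_Gf I1 hI1smooth hwp).comp p hwD
      have h1 : HasDerivAt (fun p' : ℝ => p' + ξ) 1 p := (hasDerivAt_id p).add_const ξ
      have hfull := (h1.mul hGD).const_mul (-(lam / eps / 2))
      have hev : (fun p' => K p' ξ) =ᶠ[nhds p]
          (fun p' => -(lam / eps / 2) * ((p' + ξ) * Gf I1 (lam / eps * (p' ^ 2 - ξ ^ 2)))) := by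
        filter_upwards [hUopen.mem_nhds (show p ∈ {y : ℝ | 0 < y ∧ ξ ^ 2 < y ^ 2} from ⟨hp, hp2⟩)]
          with q hq
        rw [Kred lam eps hlam heps I1 K hK q ξ hq.1 hq.2]
        ring
      have hres := hfull.congr_of_eventuallyEq hev
      simp only [Function.comp_apply] at hres
      refine hres.congr_deriv ?_
      ring
    have hd1e : (deriv fun p' => K p' ξ) =ᶠ[nhds x] (fun p =>
        -(lam / eps / 2) * (Gf I1 (lam / eps * (p ^ 2 - ξ ^ 2)) +
          ((p + ξ) * G1f I1 (lam / eps * (p ^ 2 - ξ ^ 2))) * (2 * (lam / eps) * p))) := by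
      filter_upwards [hUopen.mem_nhds (show x ∈ {y : ℝ | 0 < y ∧ ξ ^ 2 < y ^ 2} from ⟨hx, hξx⟩)]
        with p hp
      exact (hD1 p hp.1 hp.2).deriv
    have hwDx : HasDerivAt (fun p' : ℝ => lam / eps * (p' ^ 2 - ξ ^ 2))
        (2 * (lam / eps) * x) x := by
      have h := ((hasDerivAt_pow 2 x).sub_const (ξ ^ 2)).const_mul (lam / eps)
      refine h.congr_deriv ?_
      push_cast
      ring
    have hGDx := (hasDerivAt_Gf I1 hI1smooth hw).comp x hwDx
    have hG1Dx := (hasDerivAt_G1f I1 hI1smooth hw).comp x hwDx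
    have h1x : HasDerivAt (fun p' : ℝ => p' + ξ) 1 x := (hasDerivAt_id x).add_const ξ
    have h2x : HasDerivAt (fun p : ℝ => 2 * (lam / eps) * p) (2 * (lam / eps)) x := by
      simpa using (hasDerivAt_id x).const_mul (2 * (lam / eps))
    have hphi := (hGDx.add (((h1x.mul hG1Dx)).mul h2x)).const_mul (-(lam / eps / 2))
    have KXX := hd1e.deriv_eq.trans hphi.deriv
    simp only [Function.comp_apply, Pi.mul_apply] at KXX
    -- second ξ-derivative
    have hVopen : IsOpen {q : ℝ | q ^ 2 < x ^ 2} :=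
      isOpen_lt (continuous_pow 2) continuous_const
    have hD2 : ∀ q : ℝ, q ^ 2 < x ^ 2 → HasDerivAt (fun q' => K x q')
        (-(lam / eps / 2) * (Gf I1 (lam / eps * (x ^ 2 - q ^ 2)) +
          ((x + q) * G1f I1 (lam / eps * (x ^ 2 - q ^ 2))) * (-(2 * (lam / eps) * q)))) q := by
      intro q hq2
      have hwq : 0 < lam / eps * (x ^ 2 - q ^ 2) := by nlinarith
      have hwD : HasDerivAt (fun q' : ℝ => lam / eps * (x ^ 2 - q' ^ 2))
          (-(2 * (lam / eps) * q)) q := by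
        have h := ((hasDerivAt_pow 2 q).const_mul (lam / eps)).const_sub (lam / eps * x ^ 2)
        have h3 := h.congr_of_eventuallyEq
          (f₁ := fun q' : ℝ => lam / eps * (x ^ 2 - q' ^ 2))
          (Filter.Eventually.of_forall (fun y : ℝ => by ring))
        refine h3.congr_deriv ?_
        push_cast
        ring
      have hGD := (hasDerivAt_Gf I1 hI1smooth hwq).comp q hwD
      have h1 : HasDerivAt (fun q' : ℝ => x + q') 1 q := (hasDerivAt_id q).const_add x
      have hfull := (h1.mul hGD).const_mul (-(lam / eps / 2))
      have hev : (fun q' => K x q') =ᶠ[nhds q]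
          (fun q' => -(lam / eps / 2) * ((x + q') * Gf I1 (lam / eps * (x ^ 2 - q' ^ 2)))) := by
        filter_upwards [hVopen.mem_nhds (show q ∈ {y : ℝ | y ^ 2 < x ^ 2} from hq2)] with r hr
        rw [Kred lam eps hlam heps I1 K hK x r hx hr]
        ring
      have hres := hfull.congr_of_eventuallyEq hev
      simp only [Function.comp_apply] at hres
      refine hres.congr_deriv ?_
      ring
    have hd2e : (deriv fun q' => K x q') =ᶠ[nhds ξ] (fun q =>
        -(lam / eps / 2) * (Gf I1 (lam / eps * (x ^ 2 - q ^ 2)) +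
          ((x + q) * G1f I1 (lam / eps * (x ^ 2 - q ^ 2))) * (-(2 * (lam / eps) * q)))) := by
      filter_upwards [hVopen.mem_nhds (show ξ ∈ {y : ℝ | y ^ 2 < x ^ 2} from hξx)] with q hq
      exact (hD2 q hq).deriv
    have hwDq : HasDerivAt (fun q' : ℝ => lam / eps * (x ^ 2 - q' ^ 2))
        (-(2 * (lam / eps) * ξ)) ξ := by
      have h := ((hasDerivAt_pow 2 ξ).const_mul (lam / eps)).const_sub (lam / eps * x ^ 2)
      have h3 := h.congr_of_eventuallyEq
        (f₁ := fun q' : ℝ => lam / eps * (x ^ 2 - q' ^ 2))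
        (Filter.Eventually.of_forall (fun y : ℝ => by ring))
      refine h3.congr_deriv ?_
      push_cast
      ring
    have hGDq := (hasDerivAt_Gf I1 hI1smooth hw).comp ξ hwDq
    have hG1Dq := (hasDerivAt_G1f I1 hI1smooth hw).comp ξ hwDq
    have h1q : HasDerivAt (fun q' : ℝ => x + q') 1 ξ := (hasDerivAt_id ξ).const_add x
    have h2q : HasDerivAt (fun q : ℝ => -(2 * (lam / eps) * q)) (-(2 * (lam / eps))) ξ := by
      exact ((hasDerivAt_id ξ).const_mul (2 * (lam / eps))).neg.congr_deriv (by simp)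
    have hpsi := (hGDq.add (((h1q.mul hG1Dq)).mul h2q)).const_mul (-(lam / eps / 2))
    have KQQ := hd2e.deriv_eq.trans hpsi.deriv
    simp only [Function.comp_apply, Pi.mul_apply] at KQQ
    have hode := ode_Gf I1 hODE hw
    have hKx := Kred lam eps hlam heps I1 K hK x ξ hx hξx
    rw [KXX, KQQ, hKx]
    linear_combination (-(lam / eps) ^ 2 * (x + ξ) / 2) * hode
  · -- limit as ξ → x⁻
    have hmemIoo : Set.Ioo (-x) x ∈ nhdsWithin x (Set.Iio x) :=
      Ioo_mem_nhdsLT_of_mem ⟨hxx, le_refl x⟩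
    have hwt : Filter.Tendsto (fun ξ : ℝ => lam / eps * (x ^ 2 - ξ ^ 2))
        (nhdsWithin x (Set.Iio x)) (nhdsWithin (0:ℝ) (Set.Ioi 0)) := by
      apply tendsto_nhdsWithin_of_tendsto_nhds_of_eventually_within
      · have hc : Continuous fun ξ : ℝ => lam / eps * (x ^ 2 - ξ ^ 2) :=
          continuous_const.mul (continuous_const.sub (continuous_pow 2))
        have h0 := hc.tendsto x
        rw [show lam / eps * (x ^ 2 - x ^ 2) = 0 by ring] at h0
        exact h0.mono_left nhdsWithin_le_nhds
      · filter_upwards [hmemIoo] with q hq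
        have hq2 : q ^ 2 < x ^ 2 := by nlinarith [hq.1, hq.2]
        show 0 < lam / eps * (x ^ 2 - q ^ 2)
        nlinarith
    have hlin : Filter.Tendsto (fun ξ : ℝ => -(lam / eps / 2) * (x + ξ))
        (nhdsWithin x (Set.Iio x)) (nhds (-(lam / eps / 2) * (x + x))) := by
      have hc : Continuous fun ξ : ℝ => -(lam / eps / 2) * (x + ξ) :=
        continuous_const.mul (continuous_const.add continuous_id)
      exact (hc.tendsto x).mono_left nhdsWithin_le_nhds
    have hmul := hlin.mul (hGlim.comp hwt)
    have hval : -(lam / eps / 2) * (x + x) * (1/2) = -(lam * x) / (2 * eps) := by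
      field_simp
      ring
    rw [← hval]
    refine Filter.Tendsto.congr' ?_ hmul
    filter_upwards [hmemIoo] with q hq
    have hq2 : q ^ 2 < x ^ 2 := by nlinarith [hq.1, hq.2]
    rw [Kred lam eps hlam heps I1 K hK x q hx hq2]
    simp only [Function.comp_apply]
  · -- limit as ξ → -x⁺
    have hmemIoo : Set.Ioo (-x) x ∈ nhdsWithin (-x) (Set.Ioi (-x)) :=
      Ioo_mem_nhdsGT_of_mem ⟨le_refl (-x), hxx⟩
    have hwt : Filter.Tendsto (fun ξ : ℝ => lam / eps * (x ^ 2 - ξ ^ 2))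
        (nhdsWithin (-x) (Set.Ioi (-x))) (nhdsWithin (0:ℝ) (Set.Ioi 0)) := by
      apply tendsto_nhdsWithin_of_tendsto_nhds_of_eventually_within
      · have hc : Continuous fun ξ : ℝ => lam / eps * (x ^ 2 - ξ ^ 2) :=
          continuous_const.mul (continuous_const.sub (continuous_pow 2))
        have h0 := hc.tendsto (-x)
        rw [show lam / eps * (x ^ 2 - (-x) ^ 2) = 0 by ring] at h0
        exact h0.mono_left nhdsWithin_le_nhds
      · filter_upwards [hmemIoo] with q hq
        have hq2 : q ^ 2 < x ^ 2 := by nlinarith [hq.1, hq.2]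
        show 0 < lam / eps * (x ^ 2 - q ^ 2)
        nlinarith
    have hlin : Filter.Tendsto (fun ξ : ℝ => -(lam / eps / 2) * (x + ξ))
        (nhdsWithin (-x) (Set.Ioi (-x))) (nhds (-(lam / eps / 2) * (x + -x))) := by
      have hc : Continuous fun ξ : ℝ => -(lam / eps / 2) * (x + ξ) :=
        continuous_const.mul (continuous_const.add continuous_id)
      exact (hc.tendsto (-x)).mono_left nhdsWithin_le_nhds
    have hmul := hlin.mul (hGlim.comp hwt)
    have hval : -(lam / eps / 2) * (x + -x) * (1/2) = 0 := by ring
    rw [← hval]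
    refine Filter.Tendsto.congr' ?_ hmul
    filter_upwards [hmemIoo] with q hq
    have hq2 : q ^ 2 < x ^ 2 := by nlinarith [hq.1, hq.2]
    rw [Kred lam eps hlam heps I1 K hK x q hx hq2]
    simp only [Function.comp_apply]
end

section
/- The integral equation G(α,β) = f(α) + c ∫_0^α ∫_0^β G(s,t) dt ds with f continuous and bounded by M on [0,2L] has a continuous solution on T obtained by successive approximations, and this solution satisfies |G(α,β)| ≤ M e^{|c| α β} ≤ M e^{|c| L²}. -/
open Set intervalIntegral

/-
The increments of the successive approximations are double integrals of the previous increments,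
so iterating `∫₀^α ∫₀^β (s t)ⁿ = (α β)ⁿ⁺¹ / (n+1)²` gives
`|G_{n+1} - G_n| ≤ M (|c| α β)ⁿ⁺¹ / ((n+1)!)² ≤ M (|c| α β)ⁿ⁺¹ / (n+1)!`.
The Weierstrass M-test then gives uniform convergence wherever `α β` is bounded (on the triangle,
`α β ≤ L²`), summing the bounds gives `|G_n| ≤ M e^{|c| α β}`, and dominated convergence passes
the limit through the double integral. To work with globally continuous functions, `f` is first
extended from `[0, 2L]` to `ℝ` by `IccExtend`; this changes no approximation on the triangle since
`G_n(α, β)` only involves `f` on `[0, α]`.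
-/

/-- Successive approximations for the Goursat integral equation:
`G₀(α,β) = f(α)`, `G_{n+1}(α,β) = f(α) + c ∫_0^α ∫_0^β G_n`. -/
noncomputable def goursatApprox (c : ℝ) (f : ℝ → ℝ) : ℕ → ℝ → ℝ → ℝ
  | 0 => fun α _ => f α
  | n + 1 => fun α β =>
      f α + c * ∫ s in (0:ℝ)..α, ∫ t in (0:ℝ)..β, goursatApprox c f n s t

open Filter Function Topology
open scoped Nat

section DoubleIntegral

variable {h h₁ h₂ : ℝ → ℝ → ℝ}

theorem continuous_intervalIntegral_intervalIntegral (hh : Continuous (uncurry h)) :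
    Continuous fun p : ℝ × ℝ => ∫ s in (0:ℝ)..p.1, ∫ t in (0:ℝ)..p.2, h s t := by
  have hinner : Continuous (uncurry fun (p : ℝ × ℝ) (s : ℝ) => ∫ t in (0:ℝ)..p.2, h s t) :=
    continuous_parametric_intervalIntegral_of_continuous (f := fun q : (ℝ × ℝ) × ℝ => h q.2)
      (hh.comp (f := fun q : ((ℝ × ℝ) × ℝ) × ℝ => (q.1.2, q.2)) (by fun_prop)) (by fun_prop)
  exact continuous_parametric_intervalIntegral_of_continuous hinner continuous_fst

theorem intervalIntegral_intervalIntegral_sub (hh₁ : Continuous (uncurry h₁))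
    (hh₂ : Continuous (uncurry h₂)) (α β : ℝ) :
    ∫ s in (0:ℝ)..α, ∫ t in (0:ℝ)..β, (h₁ s t - h₂ s t) =
      (∫ s in (0:ℝ)..α, ∫ t in (0:ℝ)..β, h₁ s t) - ∫ s in (0:ℝ)..α, ∫ t in (0:ℝ)..β, h₂ s t := by
  have hslice {h : ℝ → ℝ → ℝ} (hh : Continuous (uncurry h)) (s : ℝ) :
      IntervalIntegrable (h s) MeasureTheory.volume 0 β :=
    (hh.comp (Continuous.prodMk_right s)).intervalIntegrable _ _
  have houter {h : ℝ → ℝ → ℝ} (hh : Continuous (uncurry h)) :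
      IntervalIntegrable (fun s => ∫ t in (0:ℝ)..β, h s t) MeasureTheory.volume 0 α :=
    (continuous_parametric_intervalIntegral_of_continuous' hh 0 β).intervalIntegrable _ _
  rw [← integral_sub (houter hh₁) (houter hh₂)]
  exact integral_congr fun s _ => integral_sub (hslice hh₁ s) (hslice hh₂ s)

theorem abs_intervalIntegral_intervalIntegral_le {K : ℝ} {m : ℕ}
    (hb : ∀ s t, 0 ≤ s → 0 ≤ t → |h s t| ≤ K * s ^ m * t ^ m) {α β : ℝ}
    (hα : 0 ≤ α) (hβ : 0 ≤ β) :
    |∫ s in (0:ℝ)..α, ∫ t in (0:ℝ)..β, h s t| ≤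
      K * (α ^ (m + 1) / (m + 1)) * (β ^ (m + 1) / (m + 1)) := by
  have hinner : ∀ s, 0 ≤ s → |∫ t in (0:ℝ)..β, h s t| ≤ K * s ^ m * (β ^ (m + 1) / (m + 1)) := by
    intro s hs
    calc |∫ t in (0:ℝ)..β, h s t| ≤ ∫ t in (0:ℝ)..β, K * s ^ m * t ^ m := by
          rw [← Real.norm_eq_abs]
          exact norm_integral_le_of_norm_le (μ := MeasureTheory.volume) hβ
            (.of_forall fun t ht => hb s t hs ht.1.le)
            ((by fun_prop : Continuous fun t : ℝ => K * s ^ m * t ^ m).intervalIntegrable _ _)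
      _ = K * s ^ m * (β ^ (m + 1) / (m + 1)) := by simp [integral_pow]
  calc |∫ s in (0:ℝ)..α, ∫ t in (0:ℝ)..β, h s t|
      ≤ ∫ s in (0:ℝ)..α, K * s ^ m * (β ^ (m + 1) / (m + 1)) := by
        rw [← Real.norm_eq_abs]
        exact norm_integral_le_of_norm_le (μ := MeasureTheory.volume) hα
          (.of_forall fun s hs => hinner s hs.1.le)
          (Continuous.intervalIntegrable
            (by fun_prop : Continuous fun s : ℝ => K * s ^ m * (β ^ (m + 1) / (m + 1))) _ _)
    _ = K * (α ^ (m + 1) / (m + 1)) * (β ^ (m + 1) / (m + 1)) := by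
        rw [integral_mul_const, integral_const_mul, integral_pow]; ring

theorem tendsto_intervalIntegral_intervalIntegral {ι : Type*} {l : Filter ι}
    [l.IsCountablyGenerated] {g : ι → ℝ → ℝ → ℝ} {C α β : ℝ}
    (hg : ∀ n, Continuous (uncurry (g n)))
    (hbound : ∀ n, ∀ s ∈ uIcc 0 α, ∀ t ∈ uIcc 0 β, |g n s t| ≤ C)
    (hlim : ∀ s ∈ uIcc 0 α, ∀ t ∈ uIcc 0 β, Tendsto (fun n => g n s t) l (𝓝 (h s t))) :
    Tendsto (fun n => ∫ s in (0:ℝ)..α, ∫ t in (0:ℝ)..β, g n s t) l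
      (𝓝 (∫ s in (0:ℝ)..α, ∫ t in (0:ℝ)..β, h s t)) := by
  refine tendsto_integral_filter_of_dominated_convergence (fun _ => C * |β - 0|)
    (.of_forall fun n =>
      (continuous_parametric_intervalIntegral_of_continuous' (hg n) 0 β).aestronglyMeasurable)
    (.of_forall fun n => .of_forall fun s hs => norm_integral_le_of_norm_le_const
      fun t ht => hbound n s (uIoc_subset_uIcc hs) t (uIoc_subset_uIcc ht))
    intervalIntegrable_const (.of_forall fun s hs => ?_)
  exact tendsto_integral_filter_of_dominated_convergence (fun _ => C)
    (.of_forall fun n => ((hg n).comp (Continuous.prodMk_right s)).aestronglyMeasurable)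
    (.of_forall fun n => .of_forall fun t ht =>
      hbound n s (uIoc_subset_uIcc hs) t (uIoc_subset_uIcc ht))
    intervalIntegrable_const
    (.of_forall fun t ht => hlim s (uIoc_subset_uIcc hs) t (uIoc_subset_uIcc ht))

end DoubleIntegral

theorem mul_le_sq_of_add_le_two_mul {α β L : ℝ} (h₀ : 0 ≤ α + β) (h : α + β ≤ 2 * L) :
    α * β ≤ L ^ 2 := by
  nlinarith [four_mul_le_sq_add α β, pow_le_pow_left₀ h₀ h 2]

section Goursat

variable {c M : ℝ} {F : ℝ → ℝ}

theorem goursatApprox_congr {f : ℝ → ℝ} {a : ℝ} (hfF : EqOn f F (Icc 0 a)) (n : ℕ) :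
    ∀ α ∈ Icc 0 a, ∀ β, goursatApprox c f n α β = goursatApprox c F n α β := by
  induction n with
  | zero => exact fun α hα _ => hfF hα
  | succ n ih =>
    intro α hα β
    simp only [goursatApprox, hfF hα]
    congr 2
    refine integral_congr fun s hs => integral_congr fun t _ => ih s ?_ t
    rw [uIcc_of_le hα.1] at hs
    exact ⟨hs.1, hs.2.trans hα.2⟩

theorem continuous_goursatApprox (hF : Continuous F) (n : ℕ) :
    Continuous (uncurry (goursatApprox c F n)) := by
  induction n with
  | zero => exact hF.comp continuous_fst
  | succ n ih =>
    exact (hF.comp continuous_fst).add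
      (continuous_const.mul (continuous_intervalIntegral_intervalIntegral ih))

theorem goursatApprox_succ_succ_sub (hF : Continuous F) (n : ℕ) (α β : ℝ) :
    goursatApprox c F (n + 2) α β - goursatApprox c F (n + 1) α β =
      c * ∫ s in (0:ℝ)..α, ∫ t in (0:ℝ)..β,
        (goursatApprox c F (n + 1) s t - goursatApprox c F n s t) := by
  rw [intervalIntegral_intervalIntegral_sub (continuous_goursatApprox hF _)
    (continuous_goursatApprox hF _)]
  simp only [goursatApprox]
  ring

variable (hF : Continuous F) (hFM : ∀ x, |F x| ≤ M)
include hF hFM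

theorem abs_goursatApprox_succ_sub_le (n : ℕ) {α β : ℝ} (hα : 0 ≤ α) (hβ : 0 ≤ β) :
    |goursatApprox c F (n + 1) α β - goursatApprox c F n α β| ≤
      M * (|c| * α * β) ^ (n + 1) / ((n + 1)! : ℝ) ^ 2 := by
  induction n generalizing α β with
  | zero =>
    have h := abs_intervalIntegral_intervalIntegral_le (h := fun s _ => F s) (m := 0)
      (fun s _ _ _ => by simpa using hFM s) hα hβ
    simp only [goursatApprox, add_sub_cancel_left, abs_mul]
    calc |c| * |∫ s in (0:ℝ)..α, ∫ _ in (0:ℝ)..β, F s| ≤ |c| * (M * α * β) := by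
          gcongr; simpa using h
      _ = _ := by
          simp only [zero_add, pow_one, Nat.factorial_one, Nat.cast_one, one_pow, div_one]
          ring
  | succ n ih =>
    set K := M * |c| ^ (n + 1) / ((n + 1)! : ℝ) ^ 2
    have hb := abs_intervalIntegral_intervalIntegral_le (K := K) (m := n + 1)
      (fun s t hs ht => (ih hs ht).trans_eq (by simp only [K]; ring)) hα hβ
    rw [goursatApprox_succ_succ_sub hF, abs_mul]
    refine (mul_le_mul_of_nonneg_left hb (abs_nonneg c)).trans_eq ?_
    simp only [K, Nat.factorial_succ (n + 1)]
    push_cast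
    field_simp
    ring

theorem abs_goursatApprox_succ_sub_le_div_factorial (n : ℕ) {α β : ℝ} (hα : 0 ≤ α)
    (hβ : 0 ≤ β) :
    |goursatApprox c F (n + 1) α β - goursatApprox c F n α β| ≤
      M * (|c| * α * β) ^ (n + 1) / (n + 1)! := by
  have hM : 0 ≤ M := (abs_nonneg _).trans (hFM 0)
  refine (abs_goursatApprox_succ_sub_le hF hFM n hα hβ).trans ?_
  gcongr
  exact le_self_pow₀ (by exact_mod_cast (n + 1).factorial_pos) two_ne_zero

theorem abs_goursatApprox_le (n : ℕ) {α β : ℝ} (hα : 0 ≤ α) (hβ : 0 ≤ β) :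
    |goursatApprox c F n α β| ≤ M * Real.exp (|c| * α * β) := by
  set x := |c| * α * β
  have htelescope : goursatApprox c F n α β = F α +
      ∑ k ∈ Finset.range n, (goursatApprox c F (k + 1) α β - goursatApprox c F k α β) := by
    rw [Finset.sum_range_sub (fun k => goursatApprox c F k α β)]
    simp only [goursatApprox]
    ring
  calc |goursatApprox c F n α β|
      ≤ M + ∑ k ∈ Finset.range n, M * x ^ (k + 1) / (k + 1)! := by
        rw [htelescope]
        refine (abs_add_le _ _).trans (add_le_add (hFM α) ?_)
        refine (Finset.abs_sum_le_sum_abs _ _).trans (Finset.sum_le_sum fun k _ => ?_)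
        exact abs_goursatApprox_succ_sub_le_div_factorial hF hFM k hα hβ
    _ = M * ∑ i ∈ Finset.range (n + 1), x ^ i / i ! := by
        rw [Finset.sum_range_succ', mul_add, Finset.mul_sum]
        simp [mul_div_assoc, add_comm]
    _ ≤ M * Real.exp x :=
        mul_le_mul_of_nonneg_left (Real.sum_le_exp_of_nonneg (by positivity) _)
          ((abs_nonneg _).trans (hFM 0))

end Goursat

section Solution

def quadrantUnderHyperbola (R : ℝ) : Set (ℝ × ℝ) := {p | 0 ≤ p.1 ∧ 0 ≤ p.2 ∧ p.1 * p.2 ≤ R}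

noncomputable def goursatSolution (c : ℝ) (F : ℝ → ℝ) (α β : ℝ) : ℝ :=
  F α + ∑' k, (goursatApprox c F (k + 1) α β - goursatApprox c F k α β)

variable {c M : ℝ} {F : ℝ → ℝ} (hF : Continuous F) (hFM : ∀ x, |F x| ≤ M)
include hF hFM

theorem tendstoUniformlyOn_goursatApprox (R : ℝ) :
    TendstoUniformlyOn (fun n => uncurry (goursatApprox c F n)) (uncurry (goursatSolution c F))
      atTop (quadrantUnderHyperbola R) := by
  have hsummable : Summable fun k : ℕ => M * (|c| * R) ^ (k + 1) / (k + 1)! := by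
    simpa only [mul_div_assoc] using
      ((summable_nat_add_iff 1).2 (Real.summable_pow_div_factorial (|c| * R))).mul_left M
  have hseries := tendstoUniformlyOn_tsum_nat hsummable (s := quadrantUnderHyperbola R)
    (f := fun k p => goursatApprox c F (k + 1) p.1 p.2 - goursatApprox c F k p.1 p.2) ?_
  · have hconst : TendstoUniformlyOn (fun _ : ℕ => fun p : ℝ × ℝ => F p.1) (fun p => F p.1) atTop
        (quadrantUnderHyperbola R) :=
      fun u hu => .of_forall fun _ _ _ => refl_mem_uniformity hu
    refine (hconst.add hseries).congr (.of_forall fun n p _ => ?_)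
    simp only [Pi.add_apply, uncurry, Finset.sum_range_sub (fun k => goursatApprox c F k p.1 p.2)]
    simp only [goursatApprox]
    ring
  · rintro k p ⟨hp₁, hp₂, hpR⟩
    refine (abs_goursatApprox_succ_sub_le_div_factorial hF hFM k hp₁ hp₂).trans ?_
    have hM : 0 ≤ M := (abs_nonneg _).trans (hFM 0)
    have hx : |c| * p.1 * p.2 ≤ |c| * R := by rw [mul_assoc]; gcongr
    gcongr M * ?_ / _
    exact pow_le_pow_left₀ (by positivity) hx _

theorem continuousOn_goursatSolution (R : ℝ) :
    ContinuousOn (uncurry (goursatSolution c F)) (quadrantUnderHyperbola R) :=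
  (tendstoUniformlyOn_goursatApprox hF hFM R).continuousOn
    (.of_forall fun n => (continuous_goursatApprox hF n).continuousOn)

theorem tendsto_goursatApprox {α β : ℝ} (hα : 0 ≤ α) (hβ : 0 ≤ β) :
    Tendsto (fun n => goursatApprox c F n α β) atTop (𝓝 (goursatSolution c F α β)) :=
  (tendstoUniformlyOn_goursatApprox hF hFM (α * β)).tendsto_at (x := (α, β)) ⟨hα, hβ, le_rfl⟩

theorem abs_goursatSolution_le {α β : ℝ} (hα : 0 ≤ α) (hβ : 0 ≤ β) :
    |goursatSolution c F α β| ≤ M * Real.exp (|c| * α * β) :=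
  le_of_tendsto (tendsto_goursatApprox hF hFM hα hβ).abs
    (.of_forall fun n => abs_goursatApprox_le hF hFM n hα hβ)

theorem goursatSolution_eq {α β : ℝ} (hα : 0 ≤ α) (hβ : 0 ≤ β) :
    goursatSolution c F α β =
      F α + c * ∫ s in (0:ℝ)..α, ∫ t in (0:ℝ)..β, goursatSolution c F s t := by
  have hintegrals : Tendsto (fun n => ∫ s in (0:ℝ)..α, ∫ t in (0:ℝ)..β, goursatApprox c F n s t)
      atTop (𝓝 (∫ s in (0:ℝ)..α, ∫ t in (0:ℝ)..β, goursatSolution c F s t)) := by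
    refine tendsto_intervalIntegral_intervalIntegral (C := M * Real.exp (|c| * α * β))
      (continuous_goursatApprox hF) (fun n s hs t ht => ?_)
      fun s hs t ht =>
        tendsto_goursatApprox hF hFM (uIcc_of_le hα ▸ hs).1 (uIcc_of_le hβ ▸ ht).1
    rw [uIcc_of_le hα] at hs
    rw [uIcc_of_le hβ] at ht
    have hM : 0 ≤ M := (abs_nonneg _).trans (hFM 0)
    refine (abs_goursatApprox_le hF hFM n hs.1 ht.1).trans ?_
    gcongr
    exacts [ht.1, hs.2, ht.2]
  exact tendsto_nhds_unique ((tendsto_goursatApprox hF hFM hα hβ).comp (tendsto_add_atTop_nat 1))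
    ((hintegrals.const_mul c).const_add (F α))

end Solution

/-- Existence for the integral form of the Goursat problem: the successive approximations
converge uniformly on the triangle `T = {α ≥ 0, β ≥ 0, α + β ≤ 2L}` to a continuous
solution `G` of `G(α,β) = f(α) + c ∫_0^α ∫_0^β G(s,t) dt ds`, which satisfies
`|G(α,β)| ≤ M e^{|c| α β} ≤ M e^{|c| L²}`. -/
theorem goursat_existence
    (L c M : ℝ) (hL : 0 < L)
    (f : ℝ → ℝ) (hf : ContinuousOn f (Icc 0 (2 * L)))
    (hfM : ∀ x ∈ Icc (0:ℝ) (2 * L), |f x| ≤ M) :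
    ∃ G : ℝ → ℝ → ℝ,
      ContinuousOn (fun p : ℝ × ℝ => G p.1 p.2)
        {p : ℝ × ℝ | 0 ≤ p.1 ∧ 0 ≤ p.2 ∧ p.1 + p.2 ≤ 2 * L} ∧
      TendstoUniformlyOn (fun n (p : ℝ × ℝ) => goursatApprox c f n p.1 p.2)
        (fun p : ℝ × ℝ => G p.1 p.2) Filter.atTop
        {p : ℝ × ℝ | 0 ≤ p.1 ∧ 0 ≤ p.2 ∧ p.1 + p.2 ≤ 2 * L} ∧
      (∀ α β : ℝ, 0 ≤ α → 0 ≤ β → α + β ≤ 2 * L →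
        G α β = f α + c * ∫ s in (0:ℝ)..α, ∫ t in (0:ℝ)..β, G s t) ∧
      (∀ α β : ℝ, 0 ≤ α → 0 ≤ β → α + β ≤ 2 * L →
        |G α β| ≤ M * Real.exp (|c| * α * β) ∧
        |G α β| ≤ M * Real.exp (|c| * L ^ 2)) := by
  have h2L : 0 ≤ 2 * L := by positivity
  set F := IccExtend h2L ((Icc 0 (2 * L)).domRestrict f)
  have hF : Continuous F := hf.domRestrict.Icc_extend'
  have hFM (x : ℝ) : |F x| ≤ M := hfM _ (projIcc 0 (2 * L) h2L x).2
  have hfF : EqOn f F (Icc 0 (2 * L)) := fun x hx =>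
    (IccExtend_of_mem h2L ((Icc 0 (2 * L)).domRestrict f) hx).symm
  have hT : {p : ℝ × ℝ | 0 ≤ p.1 ∧ 0 ≤ p.2 ∧ p.1 + p.2 ≤ 2 * L} ⊆ quadrantUnderHyperbola (L ^ 2) :=
    fun p ⟨h₁, h₂, h⟩ => ⟨h₁, h₂, mul_le_sq_of_add_le_two_mul (by positivity) h⟩
  refine ⟨goursatSolution c F, (continuousOn_goursatSolution hF hFM _).mono hT,
    ((tendstoUniformlyOn_goursatApprox hF hFM _).mono hT).congr
      (.of_forall fun n p ⟨h₁, _, h⟩ => (goursatApprox_congr hfF n p.1 ⟨h₁, by linarith⟩ p.2).symm),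
    fun α β hα hβ _ => ?_, fun α β hα hβ hαβ => ?_⟩
  · rw [hfF ⟨hα, by linarith⟩]
    exact goursatSolution_eq hF hFM hα hβ
  · have hbound := abs_goursatSolution_le (c := c) hF hFM hα hβ
    refine ⟨hbound, hbound.trans ?_⟩
    have hM : 0 ≤ M := (abs_nonneg _).trans (hFM 0)
    rw [mul_assoc]
    gcongr
    exact mul_le_sq_of_add_le_two_mul (by positivity) hαβ
end

section
/- Verification of the explicit 2×2 hyperbolic kernels: with constant coefficients c₁,c₂,c₃,c₄ and c₂c₃ > 0, the functions K^{uu}(x,ξ) = e^{(c₄-c₁)(x-ξ)/(2ε)} F(x,ξ) and K^{uv}(x,ξ) = (c₂/(2ε)) e^{(c₄-c₁)(x-ξ)/(2ε)} H(x,ξ), where F(x,ξ) = -(√(c₂c₃)/(2ε))√((x+ξ)/(x-ξ)) I₁(√(c₂c₃(x²-ξ²))/ε) and H(x,ξ) = -I₀(√(c₂c₃(x²-ξ²))/ε) for x > 0, satisfy K^{uu}_x + K^{uu}_ξ = ((c₁(ξ)-c₁(x))/ε)K^{uu} + (c₃/ε)K^{uv} (which for constant c₁ reads K^{uu}_x +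 K^{uu}_ξ = (c₃/ε)K^{uv}) and K^{uv}_x - K^{uv}_ξ = ((c₄-c₁)/ε)K^{uv} + (c₂/ε)K^{uu} on the interior of T₁. -/
open Real

/-!
The weight `exp((c₄ - c₁)(x - ξ)/(2ε))` depends only on `x - ξ`, so it commutes with `∂ₓ + ∂_ξ`
and contributes `(c₄ - c₁)/ε` times the kernel under `∂ₓ - ∂_ξ`. It remains to check
`(∂ₓ + ∂_ξ) F = (c₂c₃/(2ε²)) H` and `(∂ₓ - ∂_ξ) H = 2F`. For the Bessel argument
`z = √(c₂c₃(x² - ξ²))/ε` and `w = √((x + ξ)/(x - ξ))` one has `(∂ₓ ± ∂_ξ) z = z/(x ± ξ)`,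
`(∂ₓ ± ∂_ξ) w = ±w/(x ± ξ)` and `εz = √(c₂c₃) w (x - ξ)`; together with `I₀' = I₁` and
`z I₁'(z) + I₁(z) = z I₀(z)` both identities follow.
-/

noncomputable section

def besselArg (c eps x ξ : ℝ) : ℝ := √(c * (x ^ 2 - ξ ^ 2)) / eps

def besselKernelF (c eps : ℝ) (I1 : ℝ → ℝ) (x ξ : ℝ) : ℝ :=
  -(√c / (2 * eps)) * √((x + ξ) / (x - ξ)) * I1 (besselArg c eps x ξ)

def besselKernelH (c eps : ℝ) (I0 : ℝ → ℝ) (x ξ : ℝ) : ℝ :=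
  -I0 (besselArg c eps x ξ)

end

section Cone

variable {c eps x ξ : ℝ}

theorem sqrt_mul_sq_sub_sq_eq (hp : 0 < x + ξ) (hq : 0 < x - ξ) :
    √(c * (x ^ 2 - ξ ^ 2)) = √c * √((x + ξ) / (x - ξ)) * (x - ξ) := by
  have h : c * (x ^ 2 - ξ ^ 2) = c * ((x + ξ) / (x - ξ)) * (x - ξ) ^ 2 := by
    field_simp
    ring
  rw [h, sqrt_mul' _ (sq_nonneg _), sqrt_mul' _ (div_pos hp hq).le, sqrt_sq hq.le]

theorem sq_sqrt_add_div_sub_mul (hp : 0 < x + ξ) (hq : 0 < x - ξ) :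
    √((x + ξ) / (x - ξ)) ^ 2 * (x - ξ) = x + ξ := by
  rw [sq_sqrt (div_pos hp hq).le, div_mul_cancel₀ _ hq.ne']

theorem hasDerivAt_sqrt_add_div_sub_fst (hp : 0 < x + ξ) (hq : 0 < x - ξ) :
    HasDerivAt (fun x' => √((x' + ξ) / (x' - ξ)))
      (√((x + ξ) / (x - ξ)) / 2 * (1 / (x + ξ) - 1 / (x - ξ))) x := by
  have hw := sq_sqrt_add_div_sub_mul hp hq
  refine ((((hasDerivAt_id x).add_const ξ).div ((hasDerivAt_id x).sub_const ξ) hq.ne').sqrt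
    (div_pos hp hq).ne').congr_deriv ?_
  simp only [id, Pi.div_apply]
  field_simp
  linear_combination (-(x - ξ - (x + ξ))) * hw

theorem hasDerivAt_sqrt_add_div_sub_snd (hp : 0 < x + ξ) (hq : 0 < x - ξ) :
    HasDerivAt (fun ξ' => √((x + ξ') / (x - ξ')))
      (√((x + ξ) / (x - ξ)) / 2 * (1 / (x + ξ) + 1 / (x - ξ))) ξ := by
  have hw := sq_sqrt_add_div_sub_mul hp hq
  refine ((((hasDerivAt_id ξ).const_add x).div ((hasDerivAt_id ξ).const_sub x) hq.ne').sqrt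
    (div_pos hp hq).ne').congr_deriv ?_
  simp only [id, Pi.div_apply]
  field_simp
  linear_combination (-(x - ξ + (x + ξ))) * hw

theorem hasDerivAt_besselArg_fst (hc : 0 < c) (hp : 0 < x + ξ) (hq : 0 < x - ξ) :
    HasDerivAt (fun x' => besselArg c eps x' ξ)
      (besselArg c eps x ξ / 2 * (1 / (x + ξ) + 1 / (x - ξ))) x := by
  have hpos : 0 < c * (x ^ 2 - ξ ^ 2) := mul_pos hc (by nlinarith [mul_pos hp hq])
  refine ((((hasDerivAt_pow 2 x).sub_const (ξ ^ 2)).const_mul c).sqrt hpos.ne'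
    |>.div_const eps).congr_deriv ?_
  unfold besselArg
  field_simp
  rw [sq_sqrt hpos.le]
  push_cast
  ring

theorem hasDerivAt_besselArg_snd (hc : 0 < c) (hp : 0 < x + ξ) (hq : 0 < x - ξ) :
    HasDerivAt (fun ξ' => besselArg c eps x ξ')
      (besselArg c eps x ξ / 2 * (1 / (x + ξ) - 1 / (x - ξ))) ξ := by
  have hpos : 0 < c * (x ^ 2 - ξ ^ 2) := mul_pos hc (by nlinarith [mul_pos hp hq])
  refine ((((hasDerivAt_pow 2 ξ).const_sub (x ^ 2)).const_mul c).sqrt hpos.ne'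
    |>.div_const eps).congr_deriv ?_
  unfold besselArg
  field_simp
  rw [sq_sqrt hpos.le]
  push_cast
  ring

theorem besselArg_ne_zero (hc : 0 < c) (heps : eps ≠ 0) (hp : 0 < x + ξ) (hq : 0 < x - ξ) :
    besselArg c eps x ξ ≠ 0 :=
  div_ne_zero (sqrt_pos.2 (mul_pos hc (by nlinarith [mul_pos hp hq]))).ne' heps

theorem besselArg_eq (hp : 0 < x + ξ) (hq : 0 < x - ξ) :
    besselArg c eps x ξ = √c * √((x + ξ) / (x - ξ)) * (x - ξ) / eps := by
  rw [besselArg, sqrt_mul_sq_sub_sq_eq hp hq]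

end Cone

section Weight

variable {w : ℝ → ℝ} {f : ℝ → ℝ → ℝ} {x ξ fx fξ : ℝ}

theorem hasDerivAt_comp_sub_mul_fst {w' : ℝ} (hw : HasDerivAt w w' (x - ξ))
    (hf : HasDerivAt (fun x' => f x' ξ) fx x) :
    HasDerivAt (fun x' => w (x' - ξ) * f x' ξ) (w' * f x ξ + w (x - ξ) * fx) x :=
  (hw.comp_sub_const x ξ).mul hf

theorem hasDerivAt_comp_sub_mul_snd {w' : ℝ} (hw : HasDerivAt w w' (x - ξ))
    (hf : HasDerivAt (fun ξ' => f x ξ') fξ ξ) :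
    HasDerivAt (fun ξ' => w (x - ξ') * f x ξ') (-w' * f x ξ + w (x - ξ) * fξ) ξ :=
  (hw.comp_const_sub x ξ).mul hf

theorem deriv_add_deriv_comp_sub_mul (hw : DifferentiableAt ℝ w (x - ξ))
    (hfx : HasDerivAt (fun x' => f x' ξ) fx x) (hfξ : HasDerivAt (fun ξ' => f x ξ') fξ ξ) :
    deriv (fun x' => w (x' - ξ) * f x' ξ) x + deriv (fun ξ' => w (x - ξ') * f x ξ') ξ =
      w (x - ξ) * (fx + fξ) := by
  rw [(hasDerivAt_comp_sub_mul_fst hw.hasDerivAt hfx).deriv,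
    (hasDerivAt_comp_sub_mul_snd hw.hasDerivAt hfξ).deriv]
  ring

theorem deriv_sub_deriv_comp_sub_mul {w' : ℝ} (hw : HasDerivAt w w' (x - ξ))
    (hfx : HasDerivAt (fun x' => f x' ξ) fx x) (hfξ : HasDerivAt (fun ξ' => f x ξ') fξ ξ) :
    deriv (fun x' => w (x' - ξ) * f x' ξ) x - deriv (fun ξ' => w (x - ξ') * f x ξ') ξ =
      2 * w' * f x ξ + w (x - ξ) * (fx - fξ) := by
  rw [(hasDerivAt_comp_sub_mul_fst hw hfx).deriv, (hasDerivAt_comp_sub_mul_snd hw hfξ).deriv]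
  ring

end Weight

section BesselKernel

variable {c eps x ξ : ℝ} {I0 I1 : ℝ → ℝ}

theorem exists_hasDerivAt_besselKernelF_add_eq (hc : 0 < c) (heps : eps ≠ 0)
    (hp : 0 < x + ξ) (hq : 0 < x - ξ)
    (hI1 : HasDerivAt I1 (I0 (besselArg c eps x ξ) -
      I1 (besselArg c eps x ξ) / besselArg c eps x ξ) (besselArg c eps x ξ)) :
    ∃ Fx Fξ, HasDerivAt (fun x' => besselKernelF c eps I1 x' ξ) Fx x ∧
      HasDerivAt (fun ξ' => besselKernelF c eps I1 x ξ') Fξ ξ ∧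
      Fx + Fξ = c / (2 * eps ^ 2) * besselKernelH c eps I0 x ξ := by
  refine ⟨_, _, ((hasDerivAt_sqrt_add_div_sub_fst hp hq).const_mul _).mul
      (hI1.comp x (hasDerivAt_besselArg_fst hc hp hq)),
    ((hasDerivAt_sqrt_add_div_sub_snd hp hq).const_mul _).mul
      (hI1.comp ξ (hasDerivAt_besselArg_snd hc hp hq)), ?_⟩
  have hz := besselArg_ne_zero hc heps hp hq
  have hzw := besselArg_eq (c := c) (eps := eps) hp hq
  have hw := sq_sqrt_add_div_sub_mul hp hq
  have hc2 := sq_sqrt hc.le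
  unfold besselKernelH
  set z := besselArg c eps x ξ
  set w := √((x + ξ) / (x - ξ))
  have hzw' : eps * z = √c * w * (x - ξ) := by
    rw [hzw]
    field_simp
  field_simp
  linear_combination (-2 * (x - ξ) * I0 z) * (√c * w * hzw' + w ^ 2 * (x - ξ) * hc2 + c * hw)

theorem exists_hasDerivAt_besselKernelH_sub_eq (hc : 0 < c) (hp : 0 < x + ξ) (hq : 0 < x - ξ)
    (hI0 : HasDerivAt I0 (I1 (besselArg c eps x ξ)) (besselArg c eps x ξ)) :
    ∃ Hx Hξ, HasDerivAt (fun x' => besselKernelH c eps I0 x' ξ) Hx x ∧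
      HasDerivAt (fun ξ' => besselKernelH c eps I0 x ξ') Hξ ξ ∧
      Hx - Hξ = 2 * besselKernelF c eps I1 x ξ := by
  refine ⟨_, _, (hI0.comp x (hasDerivAt_besselArg_fst hc hp hq)).neg,
    (hI0.comp ξ (hasDerivAt_besselArg_snd hc hp hq)).neg, ?_⟩
  have hzw := besselArg_eq (c := c) (eps := eps) hp hq
  unfold besselKernelF
  set z := besselArg c eps x ξ
  field_simp
  linear_combination (-2 * (x + ξ) * I1 z) * hzw

end BesselKernel

theorem explicit_hyperbolic_kernel_verification_general
    (L eps c₁ c₂ c₃ c₄ : ℝ) (heps : 0 < eps) (hc : 0 < c₂ * c₃)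
    (I0 I1 : ℝ → ℝ)
    (hI0d : Differentiable ℝ I0) (hI1d : Differentiable ℝ I1)
    (hI0' : ∀ z : ℝ, deriv I0 z = I1 z)
    (hI1' : ∀ z : ℝ, z ≠ 0 → deriv I1 z = I0 z - I1 z / z)
    (F H Kuu Kuv : ℝ → ℝ → ℝ)
    (hF : ∀ x ξ : ℝ, F x ξ = -(Real.sqrt (c₂ * c₃) / (2 * eps)) *
      Real.sqrt ((x + ξ) / (x - ξ)) * I1 (Real.sqrt (c₂ * c₃ * (x ^ 2 - ξ ^ 2)) / eps))
    (hH : ∀ x ξ : ℝ, H x ξ = -I0 (Real.sqrt (c₂ * c₃ * (x ^ 2 - ξ ^ 2)) / eps))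
    (hKuu : ∀ x ξ : ℝ, Kuu x ξ = Real.exp ((c₄ - c₁) * (x - ξ) / (2 * eps)) * F x ξ)
    (hKuv : ∀ x ξ : ℝ, Kuv x ξ =
      c₂ / (2 * eps) * Real.exp ((c₄ - c₁) * (x - ξ) / (2 * eps)) * H x ξ) :
    ∀ x ξ : ℝ, 0 < x → x ≤ L → -x < ξ → ξ < x →
      (deriv (fun x' => Kuu x' ξ) x + deriv (fun ξ' => Kuu x ξ') ξ =
        c₃ / eps * Kuv x ξ) ∧
      (deriv (fun x' => Kuv x' ξ) x - deriv (fun ξ' => Kuv x ξ') ξ =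
        (c₄ - c₁) / eps * Kuv x ξ + c₂ / eps * Kuu x ξ) := by
  intro x ξ _ _ hξx hξ
  have hp : 0 < x + ξ := by linarith
  have hq : 0 < x - ξ := by linarith
  obtain rfl : F = besselKernelF (c₂ * c₃) eps I1 := funext₂ hF
  obtain rfl : H = besselKernelH (c₂ * c₃) eps I0 := funext₂ hH
  set z := besselArg (c₂ * c₃) eps x ξ
  have hI0 : HasDerivAt I0 (I1 z) z := hI0' z ▸ (hI0d z).hasDerivAt
  have hI1 : HasDerivAt I1 (I0 z - I1 z / z) z :=
    hI1' z (besselArg_ne_zero hc heps.ne' hp hq) ▸ (hI1d z).hasDerivAt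
  obtain ⟨Fx, Fξ, hFx, hFξ, hF_add⟩ :=
    exists_hasDerivAt_besselKernelF_add_eq (I0 := I0) hc heps.ne' hp hq hI1
  obtain ⟨Hx, Hξ, hHx, hHξ, hH_sub⟩ :=
    exists_hasDerivAt_besselKernelH_sub_eq (I1 := I1) hc hp hq hI0
  have hexp (t : ℝ) : HasDerivAt (fun s => exp ((c₄ - c₁) * s / (2 * eps)))
      (exp ((c₄ - c₁) * t / (2 * eps)) * ((c₄ - c₁) / (2 * eps))) t := by
    simpa [mul_div_assoc] using ((hasDerivAt_id t).const_mul (c₄ - c₁) |>.div_const (2 * eps)).exp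
  simp only [hKuu, hKuv]
  constructor
  · rw [deriv_add_deriv_comp_sub_mul (hexp _).differentiableAt hFx hFξ, hF_add]
    ring
  · rw [deriv_sub_deriv_comp_sub_mul ((hexp _).const_mul (c₂ / (2 * eps))) hHx hHξ, hH_sub]
    ring

/-- Verification of the explicit 2×2 hyperbolic kernels: with constant coefficients and
`c₂c₃ > 0`, the functions `K^{uu} = e^{(c₄-c₁)(x-ξ)/(2ε)} F` and
`K^{uv} = (c₂/(2ε)) e^{(c₄-c₁)(x-ξ)/(2ε)} H`, built from the modified Bessel functions
`I₀, I₁` (characterized by `I₀' = I₁` and `I₁'(z) = I₀(z) - I₁(z)/z`), satisfy the kernel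
equations `K^{uu}_x + K^{uu}_ξ = (c₃/ε)K^{uv}` and
`K^{uv}_x - K^{uv}_ξ = ((c₄-c₁)/ε)K^{uv} + (c₂/ε)K^{uu}` on the interior of `T₁`. -/
theorem explicit_hyperbolic_kernel_verification
    (L eps c₁ c₂ c₃ c₄ : ℝ) (hL : 0 < L) (heps : 0 < eps) (hc : 0 < c₂ * c₃)
    (I0 I1 : ℝ → ℝ)
    (hI0d : Differentiable ℝ I0) (hI1d : Differentiable ℝ I1)
    (hI0' : ∀ z : ℝ, deriv I0 z = I1 z)
    (hI1' : ∀ z : ℝ, z ≠ 0 → deriv I1 z = I0 z - I1 z / z)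
    (F H Kuu Kuv : ℝ → ℝ → ℝ)
    (hF : ∀ x ξ : ℝ, F x ξ = -(Real.sqrt (c₂ * c₃) / (2 * eps)) *
      Real.sqrt ((x + ξ) / (x - ξ)) * I1 (Real.sqrt (c₂ * c₃ * (x ^ 2 - ξ ^ 2)) / eps))
    (hH : ∀ x ξ : ℝ, H x ξ = -I0 (Real.sqrt (c₂ * c₃ * (x ^ 2 - ξ ^ 2)) / eps))
    (hKuu : ∀ x ξ : ℝ, Kuu x ξ = Real.exp ((c₄ - c₁) * (x - ξ) / (2 * eps)) * F x ξ)
    (hKuv : ∀ x ξ : ℝ, Kuv x ξ =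
      c₂ / (2 * eps) * Real.exp ((c₄ - c₁) * (x - ξ) / (2 * eps)) * H x ξ) :
    ∀ x ξ : ℝ, 0 < x → x ≤ L → -x < ξ → ξ < x →
      (deriv (fun x' => Kuu x' ξ) x + deriv (fun ξ' => Kuu x ξ') ξ =
        c₃ / eps * Kuv x ξ) ∧
      (deriv (fun x' => Kuv x' ξ) x - deriv (fun ξ' => Kuv x ξ') ξ =
        (c₄ - c₁) / eps * Kuv x ξ + c₂ / eps * Kuu x ξ) :=
  explicit_hyperbolic_kernel_verification_general L eps c₁ c₂ c₃ c₄ heps hc I0 I1 hI0d hI1d hI0'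
    hI1' F H Kuu Kuv hF hH hKuu hKuv
end
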